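/- Define G_n^m = ∫_{−1}^{1} (1 − x²)^{(m−1)/2} P_n^m(x) dx for integers 0 ≤ m ≤ n. Then for all integers 0 ≤ m ≤ n − 1: G_{n+1}^m = ((n² − m²)/((n+1)² − m²)) · G_{n−1}^m. -/

import Mathlib

open MeasureTheory

/-- The Legendre polynomial via the Rodrigues formula
`P_n(x) = (1/(2^n n!)) dⁿ/dxⁿ (x² − 1)ⁿ`. -/
noncomputable def legendreP (n : ℕ) (x : ℝ) : ℝ :=
  (1 / ((2 : ℝ) ^ n * Nat.factorial n)) * iteratedDeriv n (fun y : ℝ => (y ^ 2 - 1) ^ n) x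

/-- The associated Legendre function on `(−1,1)`:
`P_n^m(x) = (−1)^m (1 − x²)^{m/2} dᵐ/dxᵐ P_n(x)`. -/
noncomputable def assocLegendreP (n m : ℕ) (x : ℝ) : ℝ :=
  (-1 : ℝ) ^ m * (1 - x ^ 2) ^ ((m : ℝ) / 2) * iteratedDeriv m (legendreP n) x

/-- `G_n^m = ∫_{−1}^{1} (1 − x²)^{(m−1)/2} P_n^m(x) dx`. -/
noncomputable def Gint (n m : ℕ) : ℝ :=
  ∫ x in (-1 : ℝ)..1, (1 - x ^ 2) ^ (((m : ℝ) - 1) / 2) * assocLegendreP n m x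

/-!
Differentiating the Rodrigues formula gives `P'_{N+1} - x P'_N = (N+1) P_N` and
`x P'_{N+1} - P'_N = (N+1) P_{N+1}`; differentiating these `m` more times and eliminating yields
`(2N+1) ((1-x²) D^{m+1}P_N - (2m+1) x D^mP_N) = (N²-m²) D^mP_{N-1} - ((N+1)²-m²) D^mP_{N+1}`.
After multiplication by `(1-x²)^{m-1/2}` the left side is `(2N+1) d/dx [(1-x²)^{m+1/2} D^mP_N]`,
whose integral over `[-1,1]` vanishes, while the integrand of `G_n^m` is
`(-1)^m (1-x²)^{m-1/2} D^mP_n`.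
-/

open Polynomial

section

variable {R : Type*} [CommRing R]

theorem iterate_derivative_X_mul_succ (p : R[X]) (k : ℕ) :
    derivative^[k + 1] (X * p)
      = X * derivative^[k + 1] p + ((k : R[X]) + 1) * derivative^[k] p := by
  rw [mul_comm, iterate_derivative_mul_X, nsmul_eq_mul]
  push_cast
  ring

theorem X_mul_iterate_derivative_succ_sub {p q : R[X]} {a : R}
    (h : X * derivative p - derivative q = C a * p) (m : ℕ) :
    X * derivative^[m + 1] p - derivative^[m + 1] q = C (a - m) * derivative^[m] p := by
  induction m with
  | zero => simpa using h
  | succ m ih =>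
    have ih' := congrArg derivative ih
    simp only [derivative_sub, derivative_mul, derivative_X, derivative_C, one_mul, zero_mul,
      zero_add, ← Function.iterate_succ_apply' derivative] at ih'
    simp only [map_sub, map_natCast, Nat.cast_succ, map_add, map_one] at ih' ⊢
    linear_combination ih'

theorem iterate_derivative_succ_sub_X_mul {p q : R[X]} {a : R}
    (h : derivative p - X * derivative q = C a * q) (m : ℕ) :
    derivative^[m + 1] p - X * derivative^[m + 1] q = C (a + m) * derivative^[m] q := by
  induction m with
  | zero => simpa using h
  | succ m ih =>
    have ih' := congrArg derivative ih
    simp only [derivative_sub, derivative_mul, derivative_X, derivative_C, one_mul, zero_mul,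
      zero_add, ← Function.iterate_succ_apply' derivative] at ih'
    simp only [map_add, map_natCast, Nat.cast_succ, map_one] at ih' ⊢
    linear_combination ih'

end

noncomputable def legendrePoly (n : ℕ) : ℝ[X] :=
  C (1 / ((2 : ℝ) ^ n * n.factorial)) * derivative^[n] ((X ^ 2 - 1) ^ n)

theorem derivative_X_sq_sub_one_pow_succ (n : ℕ) :
    derivative ((X ^ 2 - 1 : ℝ[X]) ^ (n + 1))
      = C (2 * ((n : ℝ) + 1)) * (X * (X ^ 2 - 1) ^ n) := by
  rw [derivative_pow]
  simp only [derivative_sub, derivative_one, derivative_X_pow, map_mul, map_add, map_natCast,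
    map_one, map_ofNat]
  push_cast
  ring

theorem one_div_two_pow_mul_factorial_succ (n : ℕ) :
    1 / ((2 : ℝ) ^ (n + 1) * (n + 1).factorial) * (2 * ((n : ℝ) + 1))
      = 1 / ((2 : ℝ) ^ n * n.factorial) := by
  rw [Nat.factorial_succ]
  push_cast
  field_simp
  ring

theorem derivative_legendrePoly_succ_sub (n : ℕ) :
    derivative (legendrePoly (n + 1)) - X * derivative (legendrePoly n)
      = C ((n : ℝ) + 1) * legendrePoly n := by
  simp only [legendrePoly, derivative_C_mul, ← Function.iterate_succ_apply' derivative,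
    Function.iterate_succ_apply derivative (n + 1), derivative_X_sq_sub_one_pow_succ,
    iterate_derivative_C_mul, iterate_derivative_X_mul_succ]
  rw [← one_div_two_pow_mul_factorial_succ n]
  simp only [map_mul, map_add, map_natCast, map_one, map_ofNat]
  ring

theorem X_mul_derivative_legendrePoly_succ_sub (n : ℕ) :
    X * derivative (legendrePoly (n + 1)) - derivative (legendrePoly n)
      = C ((n : ℝ) + 1) * legendrePoly (n + 1) := by
  have hX : X * derivative ((X ^ 2 - 1 : ℝ[X]) ^ (n + 1))
      = C (2 * ((n : ℝ) + 1)) * ((X ^ 2 - 1) ^ (n + 1) + (X ^ 2 - 1) ^ n) := by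
    rw [derivative_X_sq_sub_one_pow_succ]; ring
  have hLeibniz := iterate_derivative_X_mul_succ (derivative ((X ^ 2 - 1 : ℝ[X]) ^ (n + 1))) n
  rw [hX, iterate_derivative_C_mul, iterate_map_add] at hLeibniz
  simp only [legendrePoly, derivative_C_mul, ← Function.iterate_succ_apply' derivative]
  rw [← Function.iterate_succ_apply derivative (n + 1),
    ← Function.iterate_succ_apply derivative n] at hLeibniz
  rw [← one_div_two_pow_mul_factorial_succ n]
  simp only [map_mul, map_add, map_natCast, map_one, map_ofNat,
    Nat.succ_eq_add_one] at hLeibniz ⊢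
  linear_combination -C (1 / ((2 : ℝ) ^ (n + 1) * (n + 1).factorial)) * hLeibniz

theorem iterate_derivative_legendrePoly_three_term (m n : ℕ) :
    C (2 * (n : ℝ) + 3) * ((1 - X ^ 2) * derivative (derivative^[m] (legendrePoly (n + 1)))
        - C (2 * (m : ℝ) + 1) * X * derivative^[m] (legendrePoly (n + 1)))
      = C (((n : ℝ) + 1) ^ 2 - (m : ℝ) ^ 2) * derivative^[m] (legendrePoly n)
        - C (((n : ℝ) + 2) ^ 2 - (m : ℝ) ^ 2) * derivative^[m] (legendrePoly (n + 2)) := by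
  have hA₁ := X_mul_iterate_derivative_succ_sub (X_mul_derivative_legendrePoly_succ_sub n) m
  have hA₂ := X_mul_iterate_derivative_succ_sub (X_mul_derivative_legendrePoly_succ_sub (n + 1)) m
  have hB₁ := iterate_derivative_succ_sub_X_mul (derivative_legendrePoly_succ_sub n) m
  have hB₂ := iterate_derivative_succ_sub_X_mul (derivative_legendrePoly_succ_sub (n + 1)) m
  rw [← Function.iterate_succ_apply' derivative]
  simp only [map_add, map_sub, map_mul, map_pow, map_natCast, map_one, map_ofNat,
    Nat.cast_add, Nat.cast_one] at hA₁ hA₂ hB₁ hB₂ ⊢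
  linear_combination ((n : ℝ[X]) + 1 - m) * hB₁ - ((n : ℝ[X]) + 1 - m) * X * hA₁
    - ((n : ℝ[X]) + m + 2) * hA₂ + ((n : ℝ[X]) + m + 2) * X * hB₂

theorem intervalIntegrable_one_sub_sq_rpow {r : ℝ} (hr : -1 < r) :
    IntervalIntegrable (fun x : ℝ => (1 - x ^ 2) ^ r) volume (-1) 1 := by
  have hright : IntervalIntegrable (fun x : ℝ => (1 - x ^ 2) ^ r) volume 0 1 := by
    have h₁ : IntervalIntegrable (fun x : ℝ => (1 - x) ^ r) volume 0 1 := by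
      simpa using
        ((intervalIntegral.intervalIntegrable_rpow' hr (a := 0) (b := 1)).comp_sub_left 1).symm
    have h₂ : ContinuousOn (fun x : ℝ => (1 + x) ^ r) (Set.uIcc 0 1) := by
      refine ContinuousOn.rpow_const (by fun_prop) fun x hx => Or.inl ?_
      rw [Set.uIcc_of_le zero_le_one] at hx
      linarith [hx.1]
    refine (h₁.mul_continuousOn h₂).congr fun x hx => ?_
    rw [Set.uIoc_of_le zero_le_one] at hx
    rw [← Real.mul_rpow (by linarith [hx.2]) (by linarith [hx.1])]
    ring_nf
  have hleft : IntervalIntegrable (fun x : ℝ => (1 - x ^ 2) ^ r) volume (-1) 0 := by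
    simpa using (IntervalIntegrable.iff_comp_neg (by simp)).mp hright.symm
  exact hleft.trans hright

theorem intervalIntegrable_one_sub_sq_rpow_mul_eval {r : ℝ} (hr : -1 < r) (p : ℝ[X]) :
    IntervalIntegrable (fun x : ℝ => (1 - x ^ 2) ^ r * p.eval x) volume (-1) 1 :=
  (intervalIntegrable_one_sub_sq_rpow hr).mul_continuousOn p.continuous.continuousOn

theorem integral_one_sub_sq_rpow_mul_eval_sub {r : ℝ} (hr : -1 < r) (a b : ℝ) (p q : ℝ[X]) :
    ∫ x in (-1 : ℝ)..1, (1 - x ^ 2) ^ r * (C a * p - C b * q).eval x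
      = a * (∫ x in (-1 : ℝ)..1, (1 - x ^ 2) ^ r * p.eval x)
        - b * ∫ x in (-1 : ℝ)..1, (1 - x ^ 2) ^ r * q.eval x := by
  rw [← intervalIntegral.integral_const_mul, ← intervalIntegral.integral_const_mul,
    ← intervalIntegral.integral_sub
      ((intervalIntegrable_one_sub_sq_rpow_mul_eval hr p).const_mul a)
      ((intervalIntegrable_one_sub_sq_rpow_mul_eval hr q).const_mul b)]
  congr 1 with x
  simp only [eval_sub, eval_mul, eval_C]
  ring

theorem integral_one_sub_sq_rpow_mul_eval_eq_zero {s : ℝ} (hs : 0 < s) (q : ℝ[X]) :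
    ∫ x in (-1 : ℝ)..1,
      (1 - x ^ 2) ^ (s - 1) * ((1 - X ^ 2) * derivative q - C (2 * s) * X * q).eval x = 0 := by
  set F : ℝ → ℝ := fun x => (1 - x ^ 2) ^ s * q.eval x
  have hcont : ContinuousOn F (Set.Icc (-1) 1) :=
    (((continuous_const.sub (continuous_pow 2)).rpow_const fun _ => Or.inr hs.le).mul
      q.continuous).continuousOn
  have hderiv : ∀ x ∈ Set.Ioo (-1 : ℝ) 1, HasDerivAt F
      ((1 - x ^ 2) ^ (s - 1) * ((1 - X ^ 2) * derivative q - C (2 * s) * X * q).eval x) x := by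
    rintro x ⟨hx₁, hx₂⟩
    have hpos : 0 < 1 - x ^ 2 := by nlinarith
    have hbase : HasDerivAt (fun x : ℝ => 1 - x ^ 2) (-(2 * x)) x := by
      simpa using (hasDerivAt_pow 2 x).const_sub 1
    refine ((hbase.rpow_const (p := s) (Or.inl hpos.ne')).mul
      (q.hasDerivAt x)).congr_deriv ?_
    rw [Real.rpow_sub_one hpos.ne']
    simp only [eval_sub, eval_mul, eval_C, eval_X, eval_one, eval_pow]
    field_simp
    ring
  have hF : ∀ x : ℝ, x ^ 2 = 1 → F x = 0 := fun x hx => by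
    simp [F, hx, Real.zero_rpow hs.ne']
  rw [intervalIntegral.integral_eq_sub_of_hasDerivAt_of_le (by norm_num) hcont hderiv
    ((intervalIntegrable_one_sub_sq_rpow_mul_eval (by linarith) _)), hF 1 (by norm_num),
    hF (-1) (by norm_num), sub_zero]

theorem iteratedDeriv_eval (p : ℝ[X]) (k : ℕ) :
    iteratedDeriv k (fun x => p.eval x) = fun x => (derivative^[k] p).eval x := by
  induction k with
  | zero => simp
  | succ k ih =>
    ext x
    rw [iteratedDeriv_succ, ih, Function.iterate_succ_apply', Polynomial.deriv]

theorem iteratedDeriv_legendreP (n m : ℕ) :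
    iteratedDeriv m (legendreP n) = fun x => (derivative^[m] (legendrePoly n)).eval x := by
  have hP : legendreP n = fun x => (legendrePoly n).eval x := by
    ext x
    have hW : (fun y : ℝ => (y ^ 2 - 1) ^ n) = fun y => ((X ^ 2 - 1 : ℝ[X]) ^ n).eval y := by
      simp
    simp [legendreP, legendrePoly, hW, iteratedDeriv_eval]
  rw [hP, iteratedDeriv_eval]

theorem Gint_eq (n m : ℕ) :
    Gint n m = (-1) ^ m * ∫ x in (-1 : ℝ)..1,
      (1 - x ^ 2) ^ ((m : ℝ) - 1 / 2) * (derivative^[m] (legendrePoly n)).eval x := by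
  have hne : (m : ℝ) - 1 / 2 ≠ 0 := by
    intro h
    have h2 : ((2 * m : ℕ) : ℝ) = 1 := by push_cast; linarith
    norm_cast at h2
    omega
  rw [Gint, ← intervalIntegral.integral_const_mul]
  refine intervalIntegral.integral_congr fun x hx => ?_
  have hx : 0 ≤ 1 - x ^ 2 := by
    rw [Set.uIcc_of_le (by norm_num)] at hx
    nlinarith [hx.1, hx.2]
  have hexp : (m : ℝ) - 1 / 2 = ((m : ℝ) - 1) / 2 + (m : ℝ) / 2 := by ring
  rw [hexp, Real.rpow_add' hx (hexp ▸ hne)]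
  simp only [assocLegendreP, iteratedDeriv_legendreP]
  ring

theorem integral_iterate_derivative_legendrePoly_recurrence (m k : ℕ) :
    (((k : ℝ) + 2) ^ 2 - (m : ℝ) ^ 2) * (∫ x in (-1 : ℝ)..1,
        (1 - x ^ 2) ^ ((m : ℝ) - 1 / 2) * (derivative^[m] (legendrePoly (k + 2))).eval x)
      = (((k : ℝ) + 1) ^ 2 - (m : ℝ) ^ 2) * ∫ x in (-1 : ℝ)..1,
        (1 - x ^ 2) ^ ((m : ℝ) - 1 / 2) * (derivative^[m] (legendrePoly k)).eval x := by
  have hvanish := integral_one_sub_sq_rpow_mul_eval_eq_zero (s := m + 1 / 2) (by positivity)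
    (derivative^[m] (legendrePoly (k + 1)))
  rw [show (m : ℝ) + 1 / 2 - 1 = m - 1 / 2 by ring,
    show 2 * ((m : ℝ) + 1 / 2) = 2 * m + 1 by ring] at hvanish
  rw [eq_comm, ← sub_eq_zero, ← integral_one_sub_sq_rpow_mul_eval_sub,
    ← iterate_derivative_legendrePoly_three_term,
    ← mul_zero (2 * (k : ℝ) + 3), ← hvanish, ← intervalIntegral.integral_const_mul]
  · congr 1 with x
    simp only [eval_mul, eval_C]
    ring
  · linarith [(m.cast_nonneg : (0 : ℝ) ≤ m)]

/-- For `0 ≤ m ≤ n − 1`: `G_{n+1}^m = ((n² − m²)/((n+1)² − m²))·G_{n−1}^m`. -/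
theorem Gint_recurrence (m n : ℕ) (hmn : m + 1 ≤ n) :
    Gint (n + 1) m
      = (((n : ℝ) ^ 2 - (m : ℝ) ^ 2) / (((n : ℝ) + 1) ^ 2 - (m : ℝ) ^ 2)) * Gint (n - 1) m := by
  obtain ⟨k, rfl⟩ : ∃ k, n = k + 1 := ⟨n - 1, by omega⟩
  have hc : ((k : ℝ) + 1 + 1) ^ 2 - (m : ℝ) ^ 2 ≠ 0 := by
    have : (m : ℝ) ≤ k := by exact_mod_cast (by omega : m ≤ k)
    nlinarith
  rw [Gint_eq, Gint_eq, Nat.add_sub_cancel]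
  push_cast
  rw [div_mul_eq_mul_div, eq_div_iff hc]
  linear_combination (-1 : ℝ) ^ m * integral_iterate_derivative_legendrePoly_recurrence m k
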